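/- arXiv:1402.0946 — 2 statements merged into one kernel-verified Lean document; each statement's English description precedes it below -/
import Mathlib

section
/- Let X be a complex Banach space, let x ∈ X, f ∈ X*, and let B ∈ B(X) be a bounded operator. If f(x) ≠ 0, f(Bx) = 0 and f(B²x) ≠ 0, then the peripheral spectrum of B(x⊗f) + (x⊗f)B equals {β, −β} for any complex number β with β² = f(B²x)·f(x). -/
/-!
With `f (B x) = 0`, the operator `T = B (x⊗f) + (x⊗f) B` sends `y` to `f y • B x + f (B y) • x`,
so it maps `x ↦ f x • B x` and `B x ↦ f (B² x) • x`; hence `T³ = β² T` and `σ(T) ⊆ {0, β, -β}`.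
Conversely `s • x + f x • B x` is an eigenvector for each square root `s = ±β` of
`f (B² x) · f x`, nonzero because `f` takes the value `s · f x ≠ 0` on it. As `β ≠ 0`, the
peripheral spectrum is `{β, -β}`.
-/

open scoped ENNReal

/-- The peripheral spectrum of a bounded operator: the set of spectral values of
maximal modulus. -/
noncomputable def pSpec {X : Type*} [NormedAddCommGroup X] [NormedSpace ℂ X]
    (T : X →L[ℂ] X) : Set ℂ :=
  {z ∈ spectrum ℂ T | (‖z‖₊ : ℝ≥0∞) = spectralRadius ℂ T}

/-- The rank of a bounded operator: the dimension of its range. -/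
noncomputable def opRank {X Y : Type*} [NormedAddCommGroup X] [NormedSpace ℂ X]
    [NormedAddCommGroup Y] [NormedSpace ℂ Y] (T : X →L[ℂ] Y) : Cardinal :=
  Module.rank ℂ (LinearMap.range (T : X →ₗ[ℂ] Y))

/-- A standard operator algebra on `X`: a subalgebra of `B(X)` containing all bounded
finite-rank operators. -/
def IsStandardOpAlg {X : Type*} [NormedAddCommGroup X] [NormedSpace ℂ X]
    (𝒜 : Subalgebra ℂ (X →L[ℂ] X)) : Prop :=
  ∀ T : X →L[ℂ] X, opRank T < Cardinal.aleph0 → T ∈ 𝒜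

/-- The set `I₁(X)` of rank-one idempotents, i.e. operators `x ⊗ f` with `f x = 1`. -/
def rankOneIdem (X : Type*) [NormedAddCommGroup X] [NormedSpace ℂ X] :
    Set (X →L[ℂ] X) :=
  {P | ∃ (f : X →L[ℂ] ℂ) (x : X), f x = 1 ∧ P = f.smulRight x}

/-- The Banach-space adjoint (dual) operator `A* : X* → X*`, `f ↦ f ∘ A`. -/
noncomputable def dualOp {X : Type*} [NormedAddCommGroup X] [NormedSpace ℂ X]
    (A : X →L[ℂ] X) : StrongDual ℂ X →L[ℂ] StrongDual ℂ X :=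
  (ContinuousLinearMap.compL ℂ X X ℂ).flip A

open Polynomial in
theorem spectrum_subset_of_pow_three_eq_smul {𝕜 A : Type*} [Field 𝕜] [Ring A] [Algebra 𝕜 A]
    {a : A} {β : 𝕜} (h : a ^ 3 = β ^ 2 • a) : spectrum 𝕜 a ⊆ {0, β, -β} := by
  intro z hz
  have hann : aeval a (X ^ 3 - C (β ^ 2) * X) = 0 := by
    simp [h, Algebra.smul_def]
  have hroot : z ^ 3 - β ^ 2 * z = 0 := by
    by_contra hne
    have hmem := spectrum.subset_polynomial_aeval a (X ^ 3 - C (β ^ 2) * X) ⟨z, hz, rfl⟩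
    rw [hann, spectrum.mem_iff, sub_zero] at hmem
    exact hmem ((Ne.isUnit (by simpa using hne)).map _)
  have hfac : z * ((z - β) * (z + β)) = 0 := by linear_combination hroot
  simp only [Set.mem_insert_iff, Set.mem_singleton_iff]
  rcases mul_eq_zero.mp hfac with h0 | hfac
  · exact Or.inl h0
  rcases mul_eq_zero.mp hfac with hp | hn
  · exact Or.inr (Or.inl (sub_eq_zero.mp hp))
  · exact Or.inr (Or.inr (eq_neg_of_add_eq_zero_left hn))

theorem ContinuousLinearMap.mem_spectrum_of_apply_eq_smul {R M : Type*} [CommRing R]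
    [TopologicalSpace M] [AddCommGroup M] [Module R M] [IsTopologicalAddGroup M]
    [ContinuousConstSMul R M] {T : M →L[R] M} {μ : R} {v : M} (hv : v ≠ 0) (hTv : T v = μ • v) :
    μ ∈ spectrum R T := by
  have hμ : Module.End.HasEigenvalue (T : M →ₗ[R] M) μ :=
    Module.End.hasEigenvalue_of_hasEigenvector ⟨Module.End.mem_eigenspace_iff.mpr hTv, hv⟩
  have hmem := hμ.mem_spectrum
  rw [spectrum.mem_iff] at hmem ⊢
  exact fun hu => hmem (hu.map ContinuousLinearMap.toLinearMapRingHom)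

theorem pSpec_eq_pair_of_spectrum_subset {X : Type*} [NormedAddCommGroup X] [NormedSpace ℂ X]
    {T : X →L[ℂ] X} {β : ℂ} (hβ : β ≠ 0) (hsub : spectrum ℂ T ⊆ {0, β, -β})
    (hpos : β ∈ spectrum ℂ T) (hneg : -β ∈ spectrum ℂ T) : pSpec T = {β, -β} := by
  have hr : spectralRadius ℂ T = ‖β‖₊ := by
    refine le_antisymm (iSup₂_le fun z hz => ?_) (le_iSup₂ (f := fun z (_ : z ∈ spectrum ℂ T) =>
      (‖z‖₊ : ℝ≥0∞)) β hpos)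
    rcases hsub hz with rfl | rfl | rfl <;> simp
  ext z
  simp only [pSpec, hr, Set.mem_ofPred_eq, Set.mem_insert_iff, Set.mem_singleton_iff]
  constructor
  · rintro ⟨hz, hnorm⟩
    rcases hsub hz with rfl | h | h
    · exact absurd (by simpa using hnorm.symm) hβ
    · exact Or.inl h
    · exact Or.inr h
  · rintro (rfl | rfl)
    · exact ⟨hpos, rfl⟩
    · exact ⟨hneg, by rw [nnnorm_neg]⟩

section RankOne

variable {𝕜 X : Type*} [NormedField 𝕜] [NormedAddCommGroup X] [NormedSpace 𝕜 X]
  {x : X} {f : X →L[𝕜] 𝕜} {B : X →L[𝕜] X}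

theorem smulRight_anticomm_apply (y : X) :
    (B * f.smulRight x + f.smulRight x * B) y = f y • B x + f (B y) • x := by
  simp

theorem smulRight_anticomm_pow_three (h : f (B x) = 0) :
    (B * f.smulRight x + f.smulRight x * B) ^ 3
      = (f (B (B x)) * f x) • (B * f.smulRight x + f.smulRight x * B) := by
  ext y
  simp only [pow_succ, pow_zero, one_mul, mul_apply_eq_comp, smul_apply,
    smulRight_anticomm_apply, map_add, map_smul, h]
  match_scalars <;> ring

theorem smulRight_anticomm_apply_eigenvector (h : f (B x) = 0) {s : 𝕜}
    (hs : s ^ 2 = f (B (B x)) * f x) :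
    (B * f.smulRight x + f.smulRight x * B) (s • x + f x • B x) = s • (s • x + f x • B x) := by
  simp only [smulRight_anticomm_apply, map_add, map_smul, h]
  match_scalars
  · ring
  · linear_combination -hs

theorem mem_spectrum_smulRight_anticomm (hx : f x ≠ 0) (h : f (B x) = 0) {s : 𝕜} (hs0 : s ≠ 0)
    (hs : s ^ 2 = f (B (B x)) * f x) :
    s ∈ spectrum 𝕜 (B * f.smulRight x + f.smulRight x * B) := by
  refine ContinuousLinearMap.mem_spectrum_of_apply_eq_smul (fun hv => ?_)
    (smulRight_anticomm_apply_eigenvector h hs)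
  have hfv := congrArg f hv
  simp only [map_add, map_smul, h, smul_eq_mul, mul_zero, add_zero, map_zero] at hfv
  exact mul_ne_zero hs0 hx hfv

end RankOne

theorem pSpec_rankOne_jordan_pair_general
    {X : Type*} [NormedAddCommGroup X] [NormedSpace ℂ X]
    (x : X) (f : X →L[ℂ] ℂ) (B : X →L[ℂ] X)
    (h1 : f x ≠ 0) (h2 : f (B x) = 0) (h3 : f (B (B x)) ≠ 0) :
    ∀ β : ℂ, β ^ 2 = f (B (B x)) * f x →
      pSpec (B * f.smulRight x + f.smulRight x * B) = {β, -β} := by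
  intro β hβ
  have hβ0 : β ≠ 0 := by
    rintro rfl
    exact mul_ne_zero h3 h1 (by simpa using hβ.symm)
  have hcube := smulRight_anticomm_pow_three (f := f) (B := B) h2
  rw [← hβ] at hcube
  exact pSpec_eq_pair_of_spectrum_subset hβ0 (spectrum_subset_of_pow_three_eq_smul hcube)
    (mem_spectrum_smulRight_anticomm h1 h2 hβ0 hβ)
    (mem_spectrum_smulRight_anticomm h1 h2 (neg_ne_zero.mpr hβ0) (by rwa [neg_sq]))

/-- part of Lemma 2.4: if `f x ≠ 0`, `f (B x) = 0` and `f (B² x) ≠ 0`,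
then the peripheral spectrum of `B (x⊗f) + (x⊗f) B` is `{β, -β}` for any `β` with
`β² = f (B² x) · f x`. -/
theorem pSpec_rankOne_jordan_pair
    {X : Type*} [NormedAddCommGroup X] [NormedSpace ℂ X] [CompleteSpace X]
    (x : X) (f : X →L[ℂ] ℂ) (B : X →L[ℂ] X)
    (h1 : f x ≠ 0) (h2 : f (B x) = 0) (h3 : f (B (B x)) ≠ 0) :
    ∀ β : ℂ, β ^ 2 = f (B (B x)) * f x →
      pSpec (B * f.smulRight x + f.smulRight x * B) = {β, -β} :=
  pSpec_rankOne_jordan_pair_general x f B h1 h2 h3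
end

section
/- Let X be a complex Banach space and let r and s be nonnegative integers with (r,s) ≠ (0,0). If A, A' ∈ B(X) satisfy σ_π(B^r A B^s + B^s A B^r) = σ_π(B^r A' B^s + B^s A' B^r) for every rank-one idempotent B ∈ I₁(X), then A = A'. -/
/-!
For a rank-one idempotent `B = x ⊗ φ` one has `B T B = φ (T x) • B`. If `r, s ≥ 1` the operator
is therefore `2 φ (A x) • B`, whose peripheral spectrum is `{2 φ (A x)}`, and the numbers
`φ (A x)` with `φ x = 1` determine `A`.

If `r = 0` or `s = 0` the operator is the Jordan product `T = B A + A B`. With `a = φ (A x)` and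
`b = φ (A (A x))` it satisfies `T³ = 2a T² + (b - a²) T`, so every nonzero spectral value `z`
solves `(z - a)² = b`; when `x, A x` are independent both roots `a ± √b` are eigenvalues, so for
`a ≠ 0` the peripheral spectrum contains such a `z ≠ 0`, shared with the operator built from `A'`.
Eliminating `z` gives `((a - a')² + (b - b'))² = 4 b (a - a')²`. Along a line of functionals
this is an identity between a quartic and a cubic polynomial unless `A x - A' x ∈ ℂ x`, so
`A - A'` is locally, hence globally, a scalar `l`, and one more shared peripheral value forces
`l = 0`.
-/

open scoped ENNReal

open Polynomial ContinuousLinearMap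

namespace SeparatingDual

variable {R V : Type*} [Field R] [TopologicalSpace R] [IsTopologicalRing R] [AddCommGroup V]
  [TopologicalSpace V] [Module R V] [SeparatingDual R V]

theorem exists_forall_apply_eq_of_linearIndependent {ι : Type*} [Fintype ι] {v : ι → V}
    (hv : LinearIndependent R v) (c : ι → R) : ∃ f : StrongDual R V, ∀ i, f (v i) = c i := by
  classical
  obtain ⟨f, hf⟩ := dualMap_surjective_iff.mpr hv.fintypeLinearCombination_injective
    (Fintype.linearCombination R c)
  refine ⟨f, fun i => ?_⟩
  simpa using LinearMap.congr_fun hf (Pi.single i 1)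

theorem eq_zero_of_forall_apply_eq_one_imp {x v : V} (hx : x ≠ 0)
    (h : ∀ f : StrongDual R V, f x = 1 → f v = 0) : v = 0 := by
  obtain ⟨f₀, hf₀⟩ := exists_eq_one (R := R) hx
  refine eq_zero_of_forall_dual_eq_zero (R := R) fun g => ?_
  by_cases hg : g x = 0
  · have h₁ := h (f₀ + g) (by simp [hf₀, hg])
    simpa [h f₀ hf₀] using h₁
  · simpa [hg] using h ((g x)⁻¹ • g) (by simp [hg])

theorem ext_of_forall_apply_eq_one {A A' : V →L[R] V}
    (h : ∀ (x : V) (φ : StrongDual R V), φ x = 1 → φ (A x) = φ (A' x)) : A = A' := by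
  ext y
  rcases eq_or_ne y 0 with rfl | hy
  · simp
  refine sub_eq_zero.mp (eq_zero_of_forall_apply_eq_one_imp (R := R) hy fun φ hφ => ?_)
  rw [map_sub, h y φ hφ, sub_self]

end SeparatingDual

theorem spectrum.eval_eq_zero_of_aeval_eq_zero {𝕜 A : Type*} [Field 𝕜] [Ring A] [Algebra 𝕜 A]
    {a : A} {p : 𝕜[X]} (hp : aeval a p = 0) {z : 𝕜} (hz : z ∈ spectrum 𝕜 a) : p.eval z = 0 := by
  rcases subsingleton_or_nontrivial A with hA | hA
  · simp [spectrum.of_subsingleton] at hz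
  simpa [hp] using spectrum.subset_polynomial_aeval a p ⟨z, hz, rfl⟩

theorem spectrum.nnnorm_le_spectralRadius {𝕜 A : Type*} [NormedField 𝕜] [Ring A] [Algebra 𝕜 A]
    {a : A} {z : 𝕜} (hz : z ∈ spectrum 𝕜 a) : (‖z‖₊ : ℝ≥0∞) ≤ spectralRadius 𝕜 a :=
  le_iSup₂ (f := fun z (_ : z ∈ spectrum 𝕜 a) => (‖z‖₊ : ℝ≥0∞)) z hz

theorem ContinuousLinearMap.mem_spectrum_of_apply_eq_smul_s12 {𝕜 E : Type*}
    [NontriviallyNormedField 𝕜] [NormedAddCommGroup E] [NormedSpace 𝕜 E] {T : E →L[𝕜] E} {z : 𝕜}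
    {v : E} (hv : v ≠ 0) (h : T v = z • v) : z ∈ spectrum 𝕜 T := by
  rintro ⟨u, hu⟩
  have h0 : (↑u : E →L[𝕜] E) v = 0 := by
    simp [hu, Algebra.algebraMap_eq_smul_one, h]
  have h1 : ((↑u⁻¹ * ↑u : E →L[𝕜] E)) v = v := by rw [u.inv_mul]; rfl
  rw [mul_apply_eq_comp, h0, map_zero] at h1
  exact hv h1.symm

theorem ContinuousLinearMap.exists_eq_smul_one_of_forall_notLinearIndependent {𝕜 E : Type*}
    [Field 𝕜] [TopologicalSpace 𝕜] [AddCommGroup E] [TopologicalSpace E] [Module 𝕜 E]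
    [ContinuousSMul 𝕜 E] {T : E →L[𝕜] E} (h : ∀ v, ¬LinearIndependent 𝕜 ![v, T v]) :
    ∃ c : 𝕜, T = c • 1 := by
  obtain ⟨c, hc⟩ := LinearMap.exists_eq_smul_id_of_forall_notLinearIndependent
    (f := (T : E →ₗ[𝕜] E)) h
  exact ⟨c, ContinuousLinearMap.coe_injective (by simpa using hc)⟩

theorem pSpec_eq_singleton {X : Type*} [NormedAddCommGroup X] [NormedSpace ℂ X]
    {T : X →L[ℂ] X} {c : ℂ} (hc : c ∈ spectrum ℂ T) (h : ∀ z ∈ spectrum ℂ T, z = 0 ∨ z = c) :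
    pSpec T = {c} := by
  have hρ : spectralRadius ℂ T = ‖c‖₊ := by
    refine le_antisymm (iSup₂_le fun z hz => ?_) (spectrum.nnnorm_le_spectralRadius hc)
    rcases h z hz with rfl | rfl <;> simp
  ext z
  simp only [pSpec, hρ, Set.mem_ofPred_eq, Set.mem_singleton_iff, ENNReal.coe_inj]
  constructor
  · rintro ⟨hz, hzc⟩
    rcases h z hz with rfl | rfl
    · simpa [eq_comm] using hzc
    · rfl
  · rintro rfl
    exact ⟨hc, rfl⟩

theorem exists_notMem_sq_ne {K : Type*} [Field K] [Infinite K] {S : Set K} (hS : S.Finite)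
    (c e₀ e₁ b₀ β : K) :
    ∃ t ∉ S, ((t + c) ^ 2 + (e₁ * t + e₀)) ^ 2 ≠ 4 * (β * t + b₀) * (t + c) ^ 2 := by
  classical
  set p : K[X] := ((X + C c) ^ 2 + (C e₁ * X + C e₀)) ^ 2 - C 4 * (C β * X + C b₀) * (X + C c) ^ 2
  have hp : p ≠ 0 := by
    have hdeg : p.natDegree = 4 := by simp only [p]; compute_degree!
    exact ne_zero_of_natDegree_gt (n := 0) (by rw [hdeg]; norm_num)
  obtain ⟨t, ht⟩ := Infinite.exists_notMem_finset (hS.toFinset ∪ p.roots.toFinset)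
  simp only [Finset.mem_union, Set.Finite.mem_toFinset, Multiset.mem_toFinset, mem_roots hp,
    IsRoot.def, not_or] at ht
  refine ⟨t, ht.1, fun h => ht.2 ?_⟩
  simp only [p, eval_sub, eval_mul, eval_pow, eval_add, eval_X, eval_C]
  linear_combination h

theorem sq_sub_add_sub_sq_eq_of_sq_sub_eq {K : Type*} [CommRing K] {z a b a' b' : K}
    (h : (z - a) ^ 2 = b) (h' : (z - a') ^ 2 = b') :
    ((a - a') ^ 2 + (b - b')) ^ 2 = 4 * b * (a - a') ^ 2 := by
  have hlin : (a - a') ^ 2 + (b - b') = -2 * (a - a') * (z - a) := by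
    linear_combination h' - h
  rw [hlin, ← h]
  ring

theorem Set.finite_setOf_one_add_mul_eq_zero {K : Type*} [Field K] (α : K) :
    {t : K | 1 + t * α = 0}.Finite := by
  refine Set.Subsingleton.finite fun t ht s hs => ?_
  have hα : α ≠ 0 := by rintro rfl; simp at ht
  simp only [Set.mem_ofPred_eq] at ht hs
  exact mul_right_cancel₀ hα (by linear_combination ht - hs)

section RankOne

variable {E : Type*} [NormedAddCommGroup E] [NormedSpace ℂ E] {φ : E →L[ℂ] ℂ} {x : E}

theorem ne_zero_of_apply_eq_one (hφ : φ x = 1) : x ≠ 0 :=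
  ne_zero_of_map (f := φ) (hφ.symm ▸ one_ne_zero)

theorem isIdempotentElem_smulRight (hφ : φ x = 1) : IsIdempotentElem (φ.smulRight x) := by
  ext y
  simp [hφ]

theorem smulRight_mul_mul_smulRight (T : E →L[ℂ] E) :
    φ.smulRight x * T * φ.smulRight x = φ (T x) • φ.smulRight x := by
  ext y
  simp only [mul_apply_eq_comp, ContinuousLinearMap.smulRight_apply, map_smul,
    smul_apply, smul_smul, mul_comm]

theorem pSpec_smul_smulRight (hφ : φ x = 1) (c : ℂ) : pSpec (c • φ.smulRight x) = {c} := by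
  refine pSpec_eq_singleton (ContinuousLinearMap.mem_spectrum_of_apply_eq_smul_s12
    (ne_zero_of_apply_eq_one hφ) (by simp [hφ])) fun z hz => ?_
  have hp : aeval (c • φ.smulRight x) (X ^ 2 - c • X : ℂ[X]) = 0 := by
    rw [map_sub, map_smul, aeval_X_pow, aeval_X, _root_.smul_pow, sq c,
      (isIdempotentElem_smulRight hφ).pow_eq two_ne_zero, smul_smul, sub_self]
  have := spectrum.eval_eq_zero_of_aeval_eq_zero hp hz
  simp only [eval_sub, eval_smul, eval_pow, eval_X, smul_eq_mul] at this
  rcases mul_eq_zero.mp (show z * (z - c) = 0 by linear_combination this) with h | h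
  · exact .inl h
  · exact .inr (sub_eq_zero.mp h)

end RankOne

section Jordan

variable {E : Type*} [NormedAddCommGroup E] [NormedSpace ℂ E] {φ : E →L[ℂ] ℂ} {x : E}

theorem jordan_smulRight_cube (hφ : φ x = 1) (A : E →L[ℂ] E) :
    (φ.smulRight x * A + A * φ.smulRight x) ^ 3 =
      (2 * φ (A x)) • (φ.smulRight x * A + A * φ.smulRight x) ^ 2 +
        (φ (A (A x)) - φ (A x) ^ 2) • (φ.smulRight x * A + A * φ.smulRight x) := by
  ext y
  simp only [pow_succ, pow_zero, one_mul, add_apply, mul_apply_eq_comp, smul_apply,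
    ContinuousLinearMap.smulRight_apply, map_add, map_smul, hφ]
  module

theorem eq_zero_or_sq_sub_eq_of_mem_spectrum_jordan (hφ : φ x = 1) (A : E →L[ℂ] E) {z : ℂ}
    (hz : z ∈ spectrum ℂ (φ.smulRight x * A + A * φ.smulRight x)) :
    z = 0 ∨ (z - φ (A x)) ^ 2 = φ (A (A x)) := by
  have hp : aeval (φ.smulRight x * A + A * φ.smulRight x)
      (X ^ 3 - (2 * φ (A x)) • X ^ 2 - (φ (A (A x)) - φ (A x) ^ 2) • X : ℂ[X]) = 0 := by
    rw [map_sub, map_sub, map_smul, map_smul, aeval_X_pow, aeval_X_pow, aeval_X,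
      jordan_smulRight_cube hφ, sub_sub, sub_self]
  have := spectrum.eval_eq_zero_of_aeval_eq_zero hp hz
  simp only [eval_sub, eval_smul, eval_pow, eval_X, smul_eq_mul] at this
  rcases mul_eq_zero.mp (show z * ((z - φ (A x)) ^ 2 - φ (A (A x))) = 0 by
    linear_combination this) with h | h
  · exact .inl h
  · exact .inr (sub_eq_zero.mp h)

theorem add_mem_spectrum_jordan (hφ : φ x = 1) {A : E →L[ℂ] E}
    (hind : LinearIndependent ℂ ![x, A x]) {w : ℂ} (hw : w ^ 2 = φ (A (A x))) :
    φ (A x) + w ∈ spectrum ℂ (φ.smulRight x * A + A * φ.smulRight x) := by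
  refine ContinuousLinearMap.mem_spectrum_of_apply_eq_smul_s12 (v := w • x + A x) ?_ ?_
  · simpa using LinearIndependent.pair_iff.mp hind w 1
  · simp only [add_apply, mul_apply_eq_comp, ContinuousLinearMap.smulRight_apply, map_add,
      map_smul, hφ, ← hw]
    module

theorem nnnorm_le_spectralRadius_jordan (hφ : φ x = 1) {A : E →L[ℂ] E}
    (hind : LinearIndependent ℂ ![x, A x]) :
    (‖φ (A x)‖₊ : ℝ≥0∞) ≤ spectralRadius ℂ (φ.smulRight x * A + A * φ.smulRight x) := by
  obtain ⟨w, hw⟩ := IsAlgClosed.exists_pow_nat_eq (φ (A (A x))) two_pos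
  have hmem := add_mem_spectrum_jordan hφ hind hw
  have hmem' := add_mem_spectrum_jordan hφ hind (w := -w) (by rw [neg_sq, hw])
  have hle : ‖φ (A x)‖₊ ≤ max ‖φ (A x) + w‖₊ ‖φ (A x) + -w‖₊ := by
    rw [← NNReal.coe_le_coe, NNReal.coe_max, coe_nnnorm, coe_nnnorm, coe_nnnorm]
    have := norm_add_le (φ (A x) + w) (φ (A x) + -w)
    rw [show φ (A x) + w + (φ (A x) + -w) = 2 * φ (A x) by ring, norm_mul, Complex.norm_two] at this
    linarith [le_max_left ‖φ (A x) + w‖ ‖φ (A x) + -w‖, le_max_right ‖φ (A x) + w‖ ‖φ (A x) + -w‖]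
  calc (‖φ (A x)‖₊ : ℝ≥0∞) ≤ max ‖φ (A x) + w‖₊ ‖φ (A x) + -w‖₊ := by exact_mod_cast hle
    _ ≤ _ := max_le (spectrum.nnnorm_le_spectralRadius hmem)
      (spectrum.nnnorm_le_spectralRadius hmem')

end Jordan

section PeripheralSpectrum

variable {E : Type*} [NormedAddCommGroup E] [NormedSpace ℂ E] [CompleteSpace E]
  {φ : E →L[ℂ] ℂ} {x : E}

theorem exists_sq_sub_eq_of_pSpec_jordan_eq (hφ : φ x = 1) {A A' : E →L[ℂ] E}
    (hind : LinearIndependent ℂ ![x, A x]) (ha : φ (A x) ≠ 0)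
    (hA : pSpec (φ.smulRight x * A + A * φ.smulRight x) =
      pSpec (φ.smulRight x * A' + A' * φ.smulRight x)) :
    ∃ z ≠ 0, (z - φ (A x)) ^ 2 = φ (A (A x)) ∧ (z - φ (A' x)) ^ 2 = φ (A' (A' x)) := by
  have : Nontrivial E := ⟨x, 0, ne_zero_of_apply_eq_one hφ⟩
  obtain ⟨z, hzσ, hzρ⟩ :=
    spectrum.exists_nnnorm_eq_spectralRadius (φ.smulRight x * A + A * φ.smulRight x)
  have hz0 : z ≠ 0 := by
    rintro rfl
    have := nnnorm_le_spectralRadius_jordan hφ hind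
    rw [← hzρ, nnnorm_zero, ENNReal.coe_zero, nonpos_iff_eq_zero, ENNReal.coe_eq_zero,
      nnnorm_eq_zero] at this
    exact ha this
  have hz' : z ∈ pSpec (φ.smulRight x * A' + A' * φ.smulRight x) := hA ▸ ⟨hzσ, hzρ⟩
  exact ⟨z, hz0, (eq_zero_or_sq_sub_eq_of_mem_spectrum_jordan hφ A hzσ).resolve_left hz0,
    (eq_zero_or_sq_sub_eq_of_mem_spectrum_jordan hφ A' hz'.1).resolve_left hz0⟩

theorem not_linearIndependent_sub_of_pSpec_jordan_eq {A A' : E →L[ℂ] E}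
    (hA : ∀ (φ : E →L[ℂ] ℂ) (x : E), φ x = 1 →
      pSpec (φ.smulRight x * A + A * φ.smulRight x) =
        pSpec (φ.smulRight x * A' + A' * φ.smulRight x))
    (hind : LinearIndependent ℂ ![x, A x]) : ¬LinearIndependent ℂ ![x, A x - A' x] := by
  intro hd
  obtain ⟨φ₀, hφ₀⟩ := SeparatingDual.exists_forall_apply_eq_of_linearIndependent hind ![1, 1]
  obtain ⟨ψ, hψ⟩ := SeparatingDual.exists_forall_apply_eq_of_linearIndependent hd ![0, 1]
  simp only [Fin.forall_fin_two, Matrix.cons_val_zero, Matrix.cons_val_one] at hφ₀ hψ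
  obtain ⟨t, ht, hne⟩ := exists_notMem_sq_ne (Set.finite_setOf_one_add_mul_eq_zero (ψ (A x)))
    (φ₀ (A x - A' x)) (φ₀ (A (A x)) - φ₀ (A' (A' x))) (ψ (A (A x)) - ψ (A' (A' x)))
    (φ₀ (A (A x))) (ψ (A (A x)))
  apply hne
  have hφt : (φ₀ + t • ψ) x = 1 := by simp [hφ₀, hψ]
  have hφtA : (φ₀ + t • ψ) (A x) ≠ 0 := by simpa [hφ₀.2, mul_comm] using ht
  obtain ⟨z, -, h, h'⟩ := exists_sq_sub_eq_of_pSpec_jordan_eq hφt hind hφtA (hA _ x hφt)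
  have hψd : ψ (A x) - ψ (A' x) = 1 := by rw [← map_sub, hψ.2]
  have key := sq_sub_add_sub_sq_eq_of_sq_sub_eq h h'
  have hdiff : (φ₀ + t • ψ) (A x) - (φ₀ + t • ψ) (A' x) = t + φ₀ (A x - A' x) := by
    simp only [add_apply, smul_apply, smul_eq_mul, map_sub]
    linear_combination t * hψd
  rw [hdiff] at key
  simp only [add_apply, smul_apply, smul_eq_mul] at key
  linear_combination key

theorem eq_zero_of_pSpec_jordan_eq_sub_smul [Nontrivial E] {A : E →L[ℂ] E} {l : ℂ}
    (hA : ∀ (φ : E →L[ℂ] ℂ) (x : E), φ x = 1 →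
      pSpec (φ.smulRight x * A + A * φ.smulRight x) =
        pSpec (φ.smulRight x * (A - l • 1) + (A - l • 1) * φ.smulRight x)) :
    l = 0 := by
  by_cases hscalar : ∀ v, ¬LinearIndependent ℂ ![v, A v]
  · obtain ⟨μ, rfl⟩ := ContinuousLinearMap.exists_eq_smul_one_of_forall_notLinearIndependent hscalar
    obtain ⟨x, hx⟩ := exists_ne (0 : E)
    obtain ⟨φ, hφ⟩ := SeparatingDual.exists_eq_one (R := ℂ) hx
    have hJ (c : ℂ) :
        φ.smulRight x * (c • 1) + c • 1 * φ.smulRight x = (2 * c) • φ.smulRight x := by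
      rw [mul_smul_comm, smul_mul_assoc, mul_one, one_mul, ← add_smul, two_mul]
    have := hA φ x hφ
    rw [← sub_smul, hJ, hJ, pSpec_smul_smulRight hφ, pSpec_smul_smulRight hφ,
      Set.singleton_eq_singleton_iff] at this
    linear_combination this / 2
  · obtain ⟨y, hy⟩ := not_forall_not.mp hscalar
    obtain ⟨φ, hφ⟩ := SeparatingDual.exists_forall_apply_eq_of_linearIndependent hy ![1, 1]
    simp only [Fin.forall_fin_two, Matrix.cons_val_zero, Matrix.cons_val_one] at hφ
    obtain ⟨z, hz0, h, h'⟩ := exists_sq_sub_eq_of_pSpec_jordan_eq hφ.1 hy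
      (by rw [hφ.2]; exact one_ne_zero) (hA φ y hφ.1)
    simp only [sub_apply, smul_apply, one_apply_eq_self, map_sub, map_smul, hφ.1, hφ.2,
      smul_eq_mul] at h h'
    have : 2 * l * z = 0 := by linear_combination h' - h
    simpa [hz0] using this

theorem eq_of_pSpec_jordan_eq {A A' : E →L[ℂ] E}
    (hA : ∀ (φ : E →L[ℂ] ℂ) (x : E), φ x = 1 →
      pSpec (φ.smulRight x * A + A * φ.smulRight x) =
        pSpec (φ.smulRight x * A' + A' * φ.smulRight x)) :
    A = A' := by
  nontriviality E
  have hloc (v : E) : ¬LinearIndependent ℂ ![v, (A - A') v] := by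
    rw [sub_apply]
    by_cases h : LinearIndependent ℂ ![v, A v]
    · exact not_linearIndependent_sub_of_pSpec_jordan_eq hA h
    by_cases h' : LinearIndependent ℂ ![v, A' v]
    · rw [← LinearIndependent.pair_neg_right_iff, neg_sub]
      exact not_linearIndependent_sub_of_pSpec_jordan_eq (fun φ x hφ => (hA φ x hφ).symm) h'
    rcases eq_or_ne v 0 with rfl | hv
    · exact fun hli => hli.ne_zero 0 rfl
    simp only [LinearIndependent.pair_iff' hv, not_forall, not_not] at h h' ⊢
    obtain ⟨a, ha⟩ := h
    obtain ⟨b, hb⟩ := h'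
    exact ⟨a - b, by rw [sub_smul, ha, hb]⟩
  obtain ⟨l, hl⟩ := ContinuousLinearMap.exists_eq_smul_one_of_forall_notLinearIndependent hloc
  rw [show A' = A - l • 1 by rw [← hl, sub_sub_cancel]] at hA ⊢
  rw [eq_zero_of_pSpec_jordan_eq_sub_smul hA, zero_smul, sub_zero]

end PeripheralSpectrum

/-- Lemma 3.3: if `(r,s) ≠ (0,0)` and the peripheral spectra of
`Bʳ A Bˢ + Bˢ A Bʳ` and `Bʳ A' Bˢ + Bˢ A' Bʳ` coincide for every rank-one idempotent
`B`, then `A = A'`. -/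
theorem eq_of_pSpec_eq_on_rankOneIdem
    {X : Type*} [NormedAddCommGroup X] [NormedSpace ℂ X] [CompleteSpace X]
    (r s : ℕ) (hrs : ¬(r = 0 ∧ s = 0)) (A A' : X →L[ℂ] X)
    (h : ∀ B ∈ rankOneIdem X,
      pSpec (B ^ r * A * B ^ s + B ^ s * A * B ^ r) =
        pSpec (B ^ r * A' * B ^ s + B ^ s * A' * B ^ r)) :
    A = A' := by
  have hB {φ : X →L[ℂ] ℂ} {x : X} (hφ : φ x = 1) := h _ ⟨φ, x, hφ, rfl⟩
  rcases eq_or_ne r 0 with rfl | hr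
  · have hs : s ≠ 0 := fun hs => hrs ⟨rfl, hs⟩
    refine eq_of_pSpec_jordan_eq fun φ x hφ => ?_
    simpa only [pow_zero, one_mul, mul_one, (isIdempotentElem_smulRight hφ).pow_eq hs,
      add_comm (A * _), add_comm (A' * _)] using hB hφ
  rcases eq_or_ne s 0 with rfl | hs
  · refine eq_of_pSpec_jordan_eq fun φ x hφ => ?_
    simpa only [pow_zero, one_mul, mul_one, (isIdempotentElem_smulRight hφ).pow_eq hr] using hB hφ
  refine SeparatingDual.ext_of_forall_apply_eq_one fun x φ hφ => ?_
  have := hB hφ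
  simp only [(isIdempotentElem_smulRight hφ).pow_eq hr, (isIdempotentElem_smulRight hφ).pow_eq hs,
    smulRight_mul_mul_smulRight, ← add_smul, pSpec_smul_smulRight hφ,
    Set.singleton_eq_singleton_iff] at this
  linear_combination this / 2
end
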